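/- Every finite tree with odd diameter d ≥ 3 and exactly l ≥ 2 leaves has at most (d − 1)·l/2 + 1 edges. -/

import Mathlib

open SimpleGraph

/-- The number of edges of a simple graph. -/
noncomputable def edgeCount {V : Type*} (G : SimpleGraph V) : ℕ := G.edgeSet.ncard

/-- The degree of a vertex. -/
noncomputable def deg {V : Type*} (G : SimpleGraph V) (v : V) : ℕ := (G.neighborSet v).ncard

/-- The number of leaves (vertices of degree 1). -/
noncomputable def leafCount {V : Type*} (G : SimpleGraph V) : ℕ := {v | deg G v = 1}.ncard

/-- The diameter: the maximum distance between two vertices. -/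
noncomputable def treeDiam {V : Type*} (G : SimpleGraph V) : ℕ :=
  sSup {n | ∃ u v : V, G.dist u v = n}

/-- κ(T) = (number of leaves) + (diameter) - 2. -/
noncomputable def kappa {V : Type*} (G : SimpleGraph V) : ℕ :=
  leafCount G + treeDiam G - 2

/-- A graph is a path graph if it is acyclic, preconnected, and has maximum degree ≤ 2
(the empty graph counts as a path). -/
def IsPathGraph {W : Type*} (H : SimpleGraph W) : Prop :=
  H.IsAcyclic ∧ H.Preconnected ∧
    ∀ v a b c : W, H.Adj v a → H.Adj v b → H.Adj v c → a = b ∨ a = c ∨ b = c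

/-- A caterpillar is a tree whose non-leaf vertices induce a path. -/
def IsCaterpillar {V : Type*} (G : SimpleGraph V) : Prop :=
  G.IsTree ∧ IsPathGraph (G.induce {v | 2 ≤ deg G v})

/-- The quotient graph of `G` along a map `c` on vertices: two images are adjacent iff
they are distinct and some edge of `G` joins their fibers. -/
def quotientGraph {V W : Type*} (G : SimpleGraph V) (c : V → W) : SimpleGraph W where
  Adj a b := a ≠ b ∧ ∃ u v : V, c u = a ∧ c v = b ∧ G.Adj u v
  symm := by
    constructor
    rintro a b ⟨hne, u, v, hu, hv, h⟩
    exact ⟨hne.symm, v, u, hv, hu, h.symm⟩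
  loopless := by
    constructor
    rintro a ⟨hne, -⟩
    exact hne rfl

/-- A spider is a tree with at most one vertex of degree greater than 2. -/
def IsSpider {V : Type*} (G : SimpleGraph V) : Prop :=
  G.IsTree ∧ ∀ u v : V, 3 ≤ deg G u → 3 ≤ deg G v → u = v

/-- `k` is the maximum number of edges of a vertex-induced subgraph of `G`
that is a caterpillar. -/
def MaxInducedCaterpillar {V : Type*} (G : SimpleGraph V) (k : ℕ) : Prop :=
  IsGreatest {j : ℕ | ∃ s : Set V, IsCaterpillar (G.induce s) ∧ edgeCount (G.induce s) = j} k

/-!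
Write `d = 2r + 1` and let `c₁c₂` be the middle edge of a diametral path. Since the edge
`c₁c₂` separates the tree, every vertex lies within distance `r` of `c₁` or of `c₂`. Every
vertex `x ∉ {c₁, c₂}` lies on the geodesic from the edge `c₁c₂` to some leaf `z`, at distance
less than `r` from `z`, and `x` is determined by the pair `(z, dist x z)`. Hence there are at
most `l r + 2` vertices, and `l r + 1 = (d - 1) l / 2 + 1` edges.
-/

lemma finite_setOf_exists_dist_eq {V : Type*} [Finite V] (G : SimpleGraph V) :
    {n | ∃ u v : V, G.dist u v = n}.Finite :=
  (Set.finite_range fun p : V × V => G.dist p.1 p.2).subset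
    (by rintro _ ⟨u, v, rfl⟩; exact ⟨(u, v), rfl⟩)

lemma dist_le_treeDiam {V : Type*} [Finite V] (G : SimpleGraph V) (u v : V) :
    G.dist u v ≤ treeDiam G :=
  le_csSup (finite_setOf_exists_dist_eq G).bddAbove ⟨u, v, rfl⟩

lemma exists_dist_eq_treeDiam {V : Type*} [Finite V] [Nonempty V] (G : SimpleGraph V) :
    ∃ u v : V, G.dist u v = treeDiam G :=
  let w := Classical.arbitrary V
  Set.Nonempty.csSup_mem (s := {n | ∃ u v : V, G.dist u v = n}) ⟨G.dist w w, w, w, rfl⟩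
    (finite_setOf_exists_dist_eq G)

lemma leafCount_eq_card_filter {V : Type*} [Fintype V] (G : SimpleGraph V)
    [DecidablePred fun v => deg G v = 1] :
    leafCount G = (Finset.univ.filter fun v => deg G v = 1).card := by
  rw [leafCount, Set.ncard_eq_toFinset_card', Set.toFinset_ofPred]

namespace SimpleGraph

variable {V : Type*} {G : SimpleGraph V}

lemma Connected.dist_getVert_of_length_eq_dist (hG : G.Connected) {u v : V} {p : G.Walk u v}
    (hp : p.length = G.dist u v) {k : ℕ} (hk : k ≤ p.length) :
    G.dist u (p.getVert k) = k ∧ G.dist (p.getVert k) v = p.length - k := by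
  have h₁ : G.dist u (p.getVert k) ≤ k :=
    (dist_le (p.take k)).trans (by simp [Walk.take_length])
  have h₂ : G.dist (p.getVert k) v ≤ p.length - k := (dist_le (p.drop k)).trans (by simp)
  have := hG.dist_triangle (u := u) (v := p.getVert k) (w := v)
  omega

namespace IsTree

lemma edgeCount_add_one [Fintype V] (hG : G.IsTree) : edgeCount G + 1 = Fintype.card V := by
  classical
  rw [← hG.card_edgeFinset, edgeCount, ← coe_edgeFinset, Set.ncard_coe_finset]

lemma length_eq_dist_of_isPath (hG : G.IsTree) {u v : V} {p : G.Walk u v} (hp : p.IsPath) :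
    p.length = G.dist u v := by
  obtain ⟨q, hq, hql⟩ := hG.connected.exists_path_of_dist u v
  rw [← hql, Subtype.mk.inj ((hG.isAcyclic.subsingleton_path u v).elim ⟨p, hp⟩ ⟨q, hq⟩)]

lemma mem_support_iff_dist_add_dist (hG : G.IsTree) {u v w : V} {p : G.Walk u v}
    (hp : p.IsPath) : w ∈ p.support ↔ G.dist u w + G.dist w v = G.dist u v := by
  constructor
  · intro hw
    obtain ⟨q, r, hq, hr, rfl⟩ := hp.mem_support_iff_exists_append.mp hw
    rw [← hG.length_eq_dist_of_isPath hq, ← hG.length_eq_dist_of_isPath hr,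
      ← hG.length_eq_dist_of_isPath hp, Walk.length_append]
  · intro h
    obtain ⟨q, -, hq⟩ := hG.connected.exists_path_of_dist u w
    obtain ⟨r, -, hr⟩ := hG.connected.exists_path_of_dist w v
    have hqr : (q.append r).IsPath :=
      (q.append r).isPath_of_length_eq_dist (by rw [Walk.length_append, hq, hr, h])
    rw [Subtype.mk.inj ((hG.isAcyclic.subsingleton_path u v).elim ⟨p, hp⟩ ⟨_, hqr⟩)]
    simp

lemma getVert_dist_of_mem_support (hG : G.IsTree) {u v w : V} {p : G.Walk u v}
    (hp : p.IsPath) (hw : w ∈ p.support) : p.getVert (G.dist u w) = w := by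
  classical
  rw [← hG.length_eq_dist_of_isPath (hp.takeUntil hw), p.getVert_length_takeUntil hw]

lemma eq_of_dist_add_dist_eq (hG : G.IsTree) {u v w w' : V}
    (hw : G.dist u w + G.dist w v = G.dist u v) (hw' : G.dist u w' + G.dist w' v = G.dist u v)
    (h : G.dist u w = G.dist u w') : w = w' := by
  obtain ⟨p, hp, -⟩ := hG.connected.exists_path_of_dist u v
  rw [← hG.getVert_dist_of_mem_support hp ((hG.mem_support_iff_dist_add_dist hp).2 hw), h,
    hG.getVert_dist_of_mem_support hp ((hG.mem_support_iff_dist_add_dist hp).2 hw')]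

lemma dist_add_dist_of_adj (hG : G.IsTree) {a b x y : V} (hab : G.Adj a b)
    (hx : G.dist x b = G.dist x a + 1) (hy : G.dist y a = G.dist y b + 1) :
    G.dist x a + G.dist a y = G.dist x y := by
  obtain ⟨p, hp, -⟩ := hG.connected.exists_path_of_dist a x
  obtain ⟨q, hq, -⟩ := hG.connected.exists_path_of_dist x y
  obtain ⟨s, hs, -⟩ := hG.connected.exists_path_of_dist y b
  -- `ab` is a bridge, and the walk `a → x → y → b` can only cross it on the geodesic `x → y`
  have hbridge : s(a, b) ∈ ((p.append q).append s).edges :=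
    isBridge_iff_forall_walk_mem_edges.mp
      (isAcyclic_iff_forall_adj_isBridge.mp hG.isAcyclic hab) _
  have hab₁ : G.dist a b = 1 := dist_eq_one_iff_adj.mpr hab
  simp only [Walk.edges_append, List.mem_append] at hbridge
  rcases hbridge with (hp' | hq') | hs'
  · have := (hG.mem_support_iff_dist_add_dist hp).1 (p.snd_mem_support_of_mem_edges hp')
    have : G.dist b x = G.dist x b := dist_comm
    have : G.dist a x = G.dist x a := dist_comm
    omega
  · exact (hG.mem_support_iff_dist_add_dist hq).1 (q.fst_mem_support_of_mem_edges hq')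
  · have := (hG.mem_support_iff_dist_add_dist hs).1 (s.fst_mem_support_of_mem_edges hs')
    omega

lemma exists_deg_eq_one_dist_add_dist [Finite V] (hG : G.IsTree) {a x : V} (hx : x ≠ a) :
    ∃ z, deg G z = 1 ∧ G.dist a x + G.dist x z = G.dist a z := by
  classical
  have := Fintype.ofFinite V
  obtain ⟨z, hzS, hmax⟩ := (Finset.univ.filter fun y => G.dist a x + G.dist x y = G.dist a y)
    |>.exists_max_image (G.dist a) ⟨x, by simp⟩
  simp only [Finset.mem_filter, Finset.mem_univ, true_and] at hzS hmax
  refine ⟨z, ?_, hzS⟩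
  obtain ⟨p, hp, hpl⟩ := hG.connected.exists_path_of_dist a z
  have hnil : ¬ p.Nil := by
    rw [← Walk.length_eq_zero_iff, hpl, ← hzS]
    have := hG.connected.pos_dist_of_ne hx.symm
    omega
  have hnbr : G.neighborSet z = {p.penultimate} := by
    ext m
    simp only [mem_neighborSet, Set.mem_singleton_iff]
    refine ⟨fun hm => hG.isAcyclic.eq_penultimate_of_adj_end hp hm ?_,
      fun hm => hm ▸ (p.adj_penultimate hnil).symm⟩
    have hzm : G.dist m z = 1 := dist_eq_one_iff_adj.mpr hm.symm
    rw [hG.mem_support_iff_dist_add_dist hp, hzm]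
    -- a neighbour of `z` farther from `a` would still lie beyond `x`, contradicting maximality
    rcases hG.dist_eq_dist_add_one_of_adj a hm with h | h
    · omega
    · have t₁ := hG.connected.dist_triangle (u := a) (v := x) (w := m)
      have t₂ := hG.connected.dist_triangle (u := x) (v := z) (w := m)
      rw [dist_comm (u := z), hzm] at t₂
      have := hmax m (by omega)
      omega
  simp [deg, hnbr]

lemma exists_deg_eq_one_of_adj [Finite V] (hG : G.IsTree) {c₁ c₂ x : V} (hc : G.Adj c₁ c₂)
    (hx₁ : x ≠ c₁) (hx₂ : x ≠ c₂) :
    ∃ z, deg G z = 1 ∧ G.dist c₁ x + G.dist x z = G.dist c₁ z ∧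
      G.dist c₂ x + G.dist x z = G.dist c₂ z := by
  wlog h : G.dist x c₂ = G.dist x c₁ + 1 generalizing c₁ c₂
  · obtain ⟨z, hz, h₂, h₁⟩ := this hc.symm hx₂ hx₁
      (by have := hG.dist_eq_dist_add_one_of_adj x hc; omega)
    exact ⟨z, hz, h₁, h₂⟩
  obtain ⟨z, hz, h₂⟩ := hG.exists_deg_eq_one_dist_add_dist hx₂
  refine ⟨z, hz, ?_, h₂⟩
  have t₁ := hG.connected.dist_triangle (u := c₁) (v := x) (w := z)
  have t₂ := hG.connected.dist_triangle (u := c₂) (v := c₁) (w := z)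
  have : G.dist c₂ c₁ = 1 := dist_eq_one_iff_adj.mpr hc.symm
  have : G.dist c₁ x = G.dist x c₁ := dist_comm
  have : G.dist c₂ x = G.dist x c₂ := dist_comm
  omega

lemma card_le_leafCount_mul_add_two [Fintype V] (hG : G.IsTree) {c₁ c₂ : V}
    (hc : G.Adj c₁ c₂) {r : ℕ} (hr : ∀ y, G.dist c₁ y ≤ r ∨ G.dist c₂ y ≤ r) :
    Fintype.card V ≤ leafCount G * r + 2 := by
  classical
  set L := Finset.univ.filter fun z => deg G z = 1
  set S := (Finset.univ : Finset V) \ {c₁, c₂}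
  have hleaf : ∀ x ∈ S, ∃ z, deg G z = 1 ∧ G.dist c₁ x + G.dist x z = G.dist c₁ z ∧
      G.dist c₂ x + G.dist x z = G.dist c₂ z := by
    intro x hx
    simp only [S, Finset.mem_sdiff, Finset.mem_univ, Finset.mem_insert, Finset.mem_singleton,
      true_and, not_or] at hx
    exact hG.exists_deg_eq_one_of_adj hc hx.1 hx.2
  choose! f hf using hleaf
  have hmaps : ∀ x ∈ S, (f x, G.dist x (f x)) ∈ L ×ˢ Finset.range r := by
    intro x hx
    obtain ⟨hz, h₁, h₂⟩ := hf x hx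
    simp only [S, Finset.mem_sdiff, Finset.mem_univ, Finset.mem_insert, Finset.mem_singleton,
      true_and, not_or] at hx
    have := hG.connected.pos_dist_of_ne (Ne.symm hx.1)
    have := hG.connected.pos_dist_of_ne (Ne.symm hx.2)
    simp only [L, Finset.mem_product, Finset.mem_filter, Finset.mem_univ, true_and,
      Finset.mem_range]
    exact ⟨hz, by rcases hr (f x) with h | h <;> omega⟩
  have hinj : Set.InjOn (fun x => (f x, G.dist x (f x))) S := by
    intro x hx y hy hxy
    obtain ⟨hfxy, hdist⟩ := Prod.mk.inj hxy
    obtain ⟨-, hx₁, -⟩ := hf x hx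
    obtain ⟨-, hy₁, -⟩ := hf y hy
    simp only [hfxy] at hx₁ hdist
    exact hG.eq_of_dist_add_dist_eq hx₁ hy₁ (by omega)
  calc Fintype.card V ≤ S.card + ({c₁, c₂} : Finset V).card :=
        Finset.card_le_card_sdiff_add_card
    _ ≤ (L ×ˢ Finset.range r).card + 2 :=
        add_le_add (Finset.card_le_card_of_injOn _ hmaps hinj) Finset.card_le_two
    _ = leafCount G * r + 2 := by
        rw [Finset.card_product, Finset.card_range, leafCount_eq_card_filter]

lemma exists_adj_forall_dist_le [Finite V] (hG : G.IsTree) {r : ℕ}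
    (hdiam : treeDiam G = 2 * r + 1) :
    ∃ c₁ c₂, G.Adj c₁ c₂ ∧ ∀ y, G.dist c₁ y ≤ r ∨ G.dist c₂ y ≤ r := by
  have := hG.connected.nonempty
  obtain ⟨u, v, huv⟩ := exists_dist_eq_treeDiam G
  obtain ⟨p, -, hp⟩ := hG.connected.exists_path_of_dist u v
  have hlen : p.length = 2 * r + 1 := by rw [hp, huv, hdiam]
  obtain ⟨hu₁, hv₁⟩ := hG.connected.dist_getVert_of_length_eq_dist hp (k := r) (by omega)
  obtain ⟨hu₂, hv₂⟩ := hG.connected.dist_getVert_of_length_eq_dist hp (k := r + 1) (by omega)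
  have hc : G.Adj (p.getVert r) (p.getVert (r + 1)) := p.adj_getVert_succ (by omega)
  refine ⟨_, _, hc, fun y => ?_⟩
  have : G.dist (p.getVert r) y = G.dist y (p.getVert r) := dist_comm
  have : G.dist (p.getVert (r + 1)) y = G.dist y (p.getVert (r + 1)) := dist_comm
  rcases hG.dist_eq_dist_add_one_of_adj y hc with h | h
  · have := hG.dist_add_dist_of_adj hc.symm h (y := u) (by omega)
    have : G.dist (p.getVert (r + 1)) u = G.dist u (p.getVert (r + 1)) := dist_comm
    have := dist_le_treeDiam G y u
    omega
  · have : G.dist v (p.getVert r) = G.dist (p.getVert r) v := dist_comm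
    have : G.dist v (p.getVert (r + 1)) = G.dist (p.getVert (r + 1)) v := dist_comm
    have := hG.dist_add_dist_of_adj hc h (y := v) (by omega)
    have := dist_le_treeDiam G y v
    omega

end IsTree

end SimpleGraph

theorem tree_edge_bound_odd_diam_general
    {V : Type*} [Fintype V] (G : SimpleGraph V) (hG : G.IsTree)
    (d l : ℕ) (hdodd : Odd d)
    (hdiam : treeDiam G = d) (hleaf : leafCount G = l) :
    edgeCount G ≤ (d - 1) * l / 2 + 1 := by
  obtain ⟨r, rfl⟩ := hdodd
  obtain ⟨c₁, c₂, hc, hr⟩ := hG.exists_adj_forall_dist_le hdiam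
  have hcard := hleaf ▸ hG.card_le_leafCount_mul_add_two hc hr
  have hedge := hG.edgeCount_add_one
  have hbound : (2 * r + 1 - 1) * l / 2 = l * r := by
    rw [Nat.add_sub_cancel, mul_assoc, Nat.mul_div_cancel_left _ two_pos, mul_comm]
  omega

/-- Every finite tree with odd diameter `d ≥ 3` and exactly `l ≥ 2` leaves
has at most `(d − 1)·l/2 + 1` edges. -/
theorem tree_edge_bound_odd_diam
    {V : Type*} [Fintype V] (G : SimpleGraph V) (hG : G.IsTree)
    (d l : ℕ) (hdodd : Odd d) (hd : 3 ≤ d) (hl : 2 ≤ l)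
    (hdiam : treeDiam G = d) (hleaf : leafCount G = l) :
    edgeCount G ≤ (d - 1) * l / 2 + 1 :=
  tree_edge_bound_odd_diam_general G hG d l hdodd hdiam hleaf
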